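/- arXiv:1509.05309 — 2 statements merged into one kernel-verified Lean document; each statement's English description precedes it below -/
import Mathlib

section
/- The images in PSL(2,7) of the three matrices A = [[6,1],[6,0]], B = [[1,6],[3,5]], C = [[3,4],[0,5]] (with entries in 𝔽₇; each matrix has determinant 1) generate the group PSL(2,7). -/
/-- `SL(2, 𝔽₇)`: the group of 2×2 matrices of determinant 1 over `ℤ/7ℤ`. -/
abbrev SL27 := Matrix.SpecialLinearGroup (Fin 2) (ZMod 7)

/-- `PSL(2,7)`: the quotient of `SL(2, 𝔽₇)` by its center `{±I}`. -/
abbrev PSL27 := SL27 ⧸ Subgroup.center SL27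

instance : DecidableEq SL27 := fun a b => decidable_of_iff (a.1 = b.1) Subtype.ext_iff.symm

private def MA : SL27 := ⟨!![6, 1; 6, 0], by decide⟩
private def MB : SL27 := ⟨!![1, 6; 3, 5], by decide⟩
private def MC : SL27 := ⟨!![3, 4; 0, 5], by decide⟩
private def MT : SL27 := ⟨!![1, 1; 0, 1], by decide⟩
private def MT' : SL27 := ⟨!![1, 0; 1, 1], by decide⟩

private lemma wordT : MA * MC * MB⁻¹ * MA⁻¹ * MC = MT := by decide
private lemma wordT' : MA * MC * MB * MA⁻¹ * MB⁻¹ = MT' := by decide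

private lemma hdetU : ∀ u : ZMod 7, Matrix.det !![(1:ZMod 7), u; 0, 1] = 1 := by decide
private lemma hdetL : ∀ u : ZMod 7, Matrix.det !![(1:ZMod 7), 0; u, 1] = 1 := by decide

private def uM (u : ZMod 7) : SL27 := ⟨!![1, u; 0, 1], hdetU u⟩
private def lM (u : ZMod 7) : SL27 := ⟨!![1, 0; u, 1], hdetL u⟩

private lemma upow : ∀ u : ZMod 7, uM u = MT ^ u.val := by decide
private lemma lpow : ∀ u : ZMod 7, lM u = MT' ^ u.val := by decide

set_option maxHeartbeats 2000000 in
private lemma key : ∀ a b c d : ZMod 7, c ≠ 0 → a * d - b * c = 1 →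
    ∃ x y : ZMod 7, !![a, b; c, d] = !![1, x; 0, 1] * (!![1, 0; c, 1] * !![1, y; 0, 1]) := by
  decide

private abbrev Hsub : Subgroup SL27 := Subgroup.closure {MT, MT'}

private lemma MT_mem : MT ∈ Hsub := Subgroup.subset_closure (Or.inl rfl)
private lemma MT'_mem : MT' ∈ Hsub := Subgroup.subset_closure (Or.inr rfl)

private lemma umem (x : ZMod 7) : uM x ∈ Hsub := by
  rw [upow]
  exact pow_mem MT_mem _

private lemma lmem (x : ZMod 7) : lM x ∈ Hsub := by
  rw [lpow]
  exact pow_mem MT'_mem _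

private lemma mem_of_c_ne (g : SL27) (hc : g.1 1 0 ≠ 0) : g ∈ Hsub := by
  have hd : g.1 0 0 * g.1 1 1 - g.1 0 1 * g.1 1 0 = 1 := by
    rw [← Matrix.det_fin_two]; exact g.2
  obtain ⟨x, y, hxy⟩ := key (g.1 0 0) (g.1 0 1) (g.1 1 0) (g.1 1 1) hc hd
  have e : g = uM x * (lM (g.1 1 0) * uM y) := by
    apply Subtype.ext
    simp only [Matrix.SpecialLinearGroup.coe_mul]
    rw [Matrix.eta_fin_two g.1]
    exact hxy
  rw [e]
  exact mul_mem (umem x) (mul_mem (lmem _) (umem y))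

private lemma mem_all (g : SL27) : g ∈ Hsub := by
  by_cases hc : g.1 1 0 = 0
  · have hd : g.1 1 1 ≠ 0 := by
      intro h
      have h2 := g.2
      rw [Matrix.det_fin_two, hc, h] at h2
      simp only [mul_zero, sub_zero] at h2
      exact absurd h2 (by decide)
    have h2 : (g * MT').1 1 0 ≠ 0 := by
      have e : (g * MT').1 1 0 = g.1 1 0 * 1 + g.1 1 1 * 1 := by
        show (g.1 * MT'.1) 1 0 = _
        simp [Matrix.SpecialLinearGroup.coe_mul, Matrix.mul_apply, Fin.sum_univ_two, MT']
      rw [e, hc]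
      simpa using hd
    have h3 := mem_of_c_ne (g * MT') h2
    have e : g = (g * MT') * MT'⁻¹ := by group
    rw [e]
    exact mul_mem h3 (inv_mem MT'_mem)
  · exact mem_of_c_ne g hc

/-- The images in `PSL(2,7)` of the matrices
`A = [[6,1],[6,0]]`, `B = [[1,6],[3,5]]`, `C = [[3,4],[0,5]]` (each of determinant 1
over `𝔽₇`) generate `PSL(2,7)`. -/
theorem stmt_16 :
    Subgroup.closure
      ({(QuotientGroup.mk (⟨!![6, 1; 6, 0], by decide⟩ : SL27) : PSL27),
        (QuotientGroup.mk (⟨!![1, 6; 3, 5], by decide⟩ : SL27) : PSL27),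
        (QuotientGroup.mk (⟨!![3, 4; 0, 5], by decide⟩ : SL27) : PSL27)} :
        Set PSL27) = ⊤ := by
  set S : Set PSL27 :=
      {(QuotientGroup.mk (⟨!![6, 1; 6, 0], by decide⟩ : SL27) : PSL27),
        (QuotientGroup.mk (⟨!![1, 6; 3, 5], by decide⟩ : SL27) : PSL27),
        (QuotientGroup.mk (⟨!![3, 4; 0, 5], by decide⟩ : SL27) : PSL27)} with hS
  have hA : (QuotientGroup.mk MA : PSL27) ∈ Subgroup.closure S :=
    Subgroup.subset_closure (Or.inl rfl)
  have hB : (QuotientGroup.mk MB : PSL27) ∈ Subgroup.closure S :=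
    Subgroup.subset_closure (Or.inr (Or.inl rfl))
  have hC : (QuotientGroup.mk MC : PSL27) ∈ Subgroup.closure S :=
    Subgroup.subset_closure (Or.inr (Or.inr rfl))
  have hT : (QuotientGroup.mk MT : PSL27) ∈ Subgroup.closure S := by
    have e : (QuotientGroup.mk MT : PSL27) =
        (QuotientGroup.mk MA : PSL27) * QuotientGroup.mk MC * (QuotientGroup.mk MB)⁻¹ *
          (QuotientGroup.mk MA)⁻¹ * QuotientGroup.mk MC := by
      rw [← wordT]; rfl
    rw [e]
    exact mul_mem (mul_mem (mul_mem (mul_mem hA hC) (inv_mem hB)) (inv_mem hA)) hC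
  have hT' : (QuotientGroup.mk MT' : PSL27) ∈ Subgroup.closure S := by
    have e : (QuotientGroup.mk MT' : PSL27) =
        (QuotientGroup.mk MA : PSL27) * QuotientGroup.mk MC * QuotientGroup.mk MB *
          (QuotientGroup.mk MA)⁻¹ * (QuotientGroup.mk MB)⁻¹ := by
      rw [← wordT']; rfl
    rw [e]
    exact mul_mem (mul_mem (mul_mem (mul_mem hA hC) hB) (inv_mem hA)) (inv_mem hB)
  rw [eq_top_iff]
  intro x _
  induction x using QuotientGroup.induction_on with
  | H g =>
    have h1 : (QuotientGroup.mk g : PSL27) ∈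
        Subgroup.map (QuotientGroup.mk' (Subgroup.center SL27))
          Hsub := ⟨g, mem_all g, rfl⟩
    rw [show Hsub = Subgroup.closure {MT, MT'} from rfl, MonoidHom.map_closure] at h1
    refine (Subgroup.closure_le _).2 ?_ h1
    rintro z hz
    rcases hz with ⟨w, (rfl | rfl), rfl⟩
    · exact hT
    · exact hT'
end

section
/- Let ω be a primitive cube root of unity (so ω² + ω + 1 = 0) and ℤ[ω] the ring of Eisenstein integers. The elements of PSL(2,ℤ[ω]) represented by the matrices γ₀ = [[0,1],[−1,ω]] and γ₀' = [[0,−1],[1,ω]] are not conjugate in PSL(2,ℤ[ω]). -/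
open Polynomial

/-- The ring `ℤ[ω]` of Eisenstein integers, realized as `ℤ[x]/(x² + x + 1)`. -/
abbrev Eisenstein : Type := AdjoinRoot (X ^ 2 + X + 1 : ℤ[X])

/-- A primitive cube root of unity `ω` (satisfying `ω² + ω + 1 = 0`) in `ℤ[ω]`. -/
noncomputable def ω : Eisenstein := AdjoinRoot.root _

/-- `SL(2, ℤ[ω])`: 2×2 matrices of determinant 1 over the Eisenstein integers. -/
abbrev SL2E := Matrix.SpecialLinearGroup (Fin 2) Eisenstein

/-- `PSL(2, ℤ[ω])`: the quotient of `SL(2, ℤ[ω])` by its center `{±I}`. -/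
abbrev PSL2E := SL2E ⧸ Subgroup.center SL2E

/-- `γ₀ = [[0,1],[−1,ω]]` as an element of `SL(2, ℤ[ω])`. -/
noncomputable def γ₀ : SL2E :=
  ⟨!![0, 1; -1, ω], by simp [Matrix.det_fin_two_of]⟩

/-- `γ₀' = [[0,−1],[1,ω]]` as an element of `SL(2, ℤ[ω])`. -/
noncomputable def γ₀' : SL2E :=
  ⟨!![0, -1; 1, ω], by simp [Matrix.det_fin_two_of]⟩

/-- Reduction `ℤ[ω] → 𝔽₃` sending `ω ↦ 1`. -/
noncomputable def φ : Eisenstein →+* ZMod 3 :=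
  AdjoinRoot.lift (Int.castRingHom (ZMod 3)) 1 (by simp [eval₂_add, eval₂_pow]; decide)

lemma φ_ω : φ ω = 1 := AdjoinRoot.lift_root _

noncomputable def Φ : SL2E →* Matrix.SpecialLinearGroup (Fin 2) (ZMod 3) :=
  Matrix.SpecialLinearGroup.map φ

/-- the matrix underlying an element of `SL(2, 𝔽₃)`. -/
def cm (x : Matrix.SpecialLinearGroup (Fin 2) (ZMod 3)) : Matrix (Fin 2) (Fin 2) (ZMod 3) := x

lemma cm_mul (x y : Matrix.SpecialLinearGroup (Fin 2) (ZMod 3)) :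
    cm (x * y) = cm x * cm y := rfl

lemma Φ_coe (g : SL2E) : cm (Φ g) = (g : Matrix (Fin 2) (Fin 2) Eisenstein).map φ := rfl

lemma Φ_γ₀ : cm (Φ γ₀) = !![0,1;-1,1] := by
  rw [Φ_coe]
  ext i j
  fin_cases i <;> fin_cases j <;> simp [γ₀, Matrix.map_apply, φ_ω]

lemma Φ_γ₀' : cm (Φ γ₀') = !![0,-1;1,1] := by
  rw [Φ_coe]
  ext i j
  fin_cases i <;> fin_cases j <;> simp [γ₀', Matrix.map_apply, φ_ω]

noncomputable def u : SL2E := ⟨!![1, 1; 0, 1], by simp [Matrix.det_fin_two_of]⟩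
noncomputable def l : SL2E := ⟨!![1, 0; 1, 1], by simp [Matrix.det_fin_two_of]⟩

lemma Φ_u : cm (Φ u) = !![1,1;0,1] := by
  rw [Φ_coe]; ext i j; fin_cases i <;> fin_cases j <;> simp [u, Matrix.map_apply]

lemma Φ_l : cm (Φ l) = !![1,0;1,1] := by
  rw [Φ_coe]; ext i j; fin_cases i <;> fin_cases j <;> simp [l, Matrix.map_apply]

lemma det_cm (x : Matrix.SpecialLinearGroup (Fin 2) (ZMod 3)) :
    cm x 0 0 * cm x 1 1 - cm x 0 1 * cm x 1 0 = 1 := by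
  have := x.2
  rwa [Matrix.det_fin_two] at this

lemma scalar_check : ∀ Z : Matrix (Fin 2) (Fin 2) (ZMod 3),
    Z * !![1,1;0,1] = !![1,1;0,1] * Z → Z * !![1,0;1,1] = !![1,0;1,1] * Z →
    Z 0 0 * Z 1 1 - Z 0 1 * Z 1 0 = 1 → Z = 1 ∨ Z = -1 := by decide

lemma center_image (z : SL2E) (hz : z ∈ Subgroup.center SL2E) :
    cm (Φ z) = 1 ∨ cm (Φ z) = -1 := by
  rw [Subgroup.mem_center_iff] at hz
  have hu : Φ z * Φ u = Φ u * Φ z := by rw [← map_mul, ← map_mul, hz u]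
  have hl : Φ z * Φ l = Φ l * Φ z := by rw [← map_mul, ← map_mul, hz l]
  have hum : cm (Φ z) * !![1,1;0,1] = !![1,1;0,1] * cm (Φ z) := by
    rw [← Φ_u, ← cm_mul, ← cm_mul, hu]
  have hlm : cm (Φ z) * !![1,0;1,1] = !![1,0;1,1] * cm (Φ z) := by
    rw [← Φ_l, ← cm_mul, ← cm_mul, hl]
  exact scalar_check _ hum hlm (det_cm _)

lemma no_conj : ∀ M : Matrix (Fin 2) (Fin 2) (ZMod 3),
    M 0 0 * M 1 1 - M 0 1 * M 1 0 = 1 →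
    M * !![0,1;-1,1] ≠ !![0,-1;1,1] * M ∧ M * !![0,1;-1,1] ≠ -(!![0,-1;1,1] * M) := by
  decide

/-- The elements of `PSL(2, ℤ[ω])` represented by the matrices `γ₀` and
`γ₀'` are not conjugate in `PSL(2, ℤ[ω])`. -/
theorem stmt_19 :
    ¬ IsConj (QuotientGroup.mk γ₀ : PSL2E) (QuotientGroup.mk γ₀' : PSL2E) := by
  rw [isConj_iff]
  rintro ⟨q, hq⟩
  obtain ⟨g, rfl⟩ := QuotientGroup.mk_surjective q
  rw [eq_comm, ← QuotientGroup.mk_inv, ← QuotientGroup.mk_mul, ← QuotientGroup.mk_mul,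
    QuotientGroup.eq] at hq
  set z : SL2E := γ₀'⁻¹ * (g * γ₀ * g⁻¹) with hz
  have hgz : g * γ₀ = γ₀' * z * g := by rw [hz]; group
  have hΦ : Φ g * Φ γ₀ = Φ γ₀' * Φ z * Φ g := by
    rw [← map_mul, ← map_mul, ← map_mul, hgz]
  have hΦm : cm (Φ g) * cm (Φ γ₀) = cm (Φ γ₀') * cm (Φ z) * cm (Φ g) := by
    rw [← cm_mul, ← cm_mul, ← cm_mul, hΦ]
  obtain ⟨h1, h2⟩ := no_conj (cm (Φ g)) (det_cm _)
  rcases center_image z hq with h | h <;> rw [Φ_γ₀, Φ_γ₀', h] at hΦm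
  · exact h1 (by simpa using hΦm)
  · apply h2
    rw [hΦm, mul_neg_one, Matrix.neg_mul]
end
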